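/- Let L > 0, ν ≥ 0, let a ∈ ℝ³ with ‖a‖₂ = 1, and let λ ∈ ℂ. Suppose v : ℝ → ℂ³ is twice continuously differentiable, not identically zero on [0,L], satisfies λ v(x) = ν v''(x) + a × v''(x) for all x ∈ [0,L] (where × is the cross product on ℂ³ and a is regarded as a vector in ℂ³ with real entries), and satisfies v'(0) = v'(L) = 0. Then Re λ ≤ 0. (The stability content of the paper's Theorem 2.4: all eigenvalues of the Landau–Lifshitz operator linearized at the equilibrium a have nonpositive real part.) -/

import Mathlib

/-- Cross product on `ℂ³ = EuclideanSpace ℂ (Fin 3)`. -/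
noncomputable def cross3C (u v : EuclideanSpace ℂ (Fin 3)) : EuclideanSpace ℂ (Fin 3) :=
  (WithLp.equiv 2 (Fin 3 → ℂ)).symm
    ![u 1 * v 2 - u 2 * v 1, u 2 * v 0 - u 0 * v 2, u 0 * v 1 - u 1 * v 0]

/-!
Pair the eigenvalue equation `λ v = T v''` with `v` and integrate over `[0, L]`. Integrating by
parts, the boundary term `⟪v, T v'⟫` vanishes by the Neumann conditions, so
`Re λ ∫ ‖v‖² = -∫ Re ⟪v', T v'⟫`. For `T w = ν w + a × w` with `a` real, `⟪w, a × w⟫` is purely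
imaginary, so `Re ⟪w, T w⟫ = ν ‖w‖² ≥ 0`; as `∫ ‖v‖² > 0`, this forces `Re λ ≤ 0`.
-/

open scoped InnerProductSpace
open RCLike Set intervalIntegral

section Neumann

variable {𝕜 E : Type*} [RCLike 𝕜] [NormedAddCommGroup E] [InnerProductSpace 𝕜 E]

theorem re_inner_smul_self_right (c : 𝕜) (x : E) : re ⟪x, c • x⟫_𝕜 = re c * ‖x‖ ^ 2 := by
  rw [inner_smul_right, inner_self_eq_norm_sq_to_K, ← ofReal_pow, re_mul_ofReal]

variable [NormedSpace ℝ E] (T : E →L[ℝ] E) {v : ℝ → E}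

theorem hasDerivAt_re_inner_apply_deriv (hv : Differentiable ℝ v)
    (hv' : Differentiable ℝ (deriv v)) (x : ℝ) :
    HasDerivAt (fun t ↦ re ⟪v t, T (deriv v t)⟫_𝕜)
      (re ⟪v x, T (deriv (deriv v) x)⟫_𝕜 + re ⟪deriv v x, T (deriv v x)⟫_𝕜) x := by
  have hT := T.hasFDerivAt.comp_hasDerivAt x (hv' x).hasDerivAt
  have h := (hv x).hasDerivAt.inner 𝕜 hT
  rw [← map_add]
  exact (reCLM (K := 𝕜)).hasFDerivAt.comp_hasDerivAt x h

theorem integral_re_inner_apply_deriv_deriv_add_eq_zero (hv : ContDiff ℝ 2 v) {L : ℝ}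
    (hbc0 : deriv v 0 = 0) (hbcL : deriv v L = 0) :
    ∫ x in 0..L, (re ⟪v x, T (deriv (deriv v) x)⟫_𝕜 + re ⟪deriv v x, T (deriv v x)⟫_𝕜) = 0 := by
  have hv' : ContDiff ℝ 1 (deriv v) := hv.iterate_deriv' 1 1
  have hcont : Continuous fun x ↦
      re ⟪v x, T (deriv (deriv v) x)⟫_𝕜 + re ⟪deriv v x, T (deriv v x)⟫_𝕜 := by
    have := hv'.continuous_deriv le_rfl
    have := hv'.continuous
    have := hv.continuous
    fun_prop
  rw [integral_eq_sub_of_hasDerivAt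
    (fun x _ ↦ hasDerivAt_re_inner_apply_deriv T (hv.differentiable (by norm_num))
      (hv'.differentiable one_ne_zero) x) (hcont.intervalIntegrable _ _)]
  simp [hbc0, hbcL]

theorem re_nonpos_of_neumann_eigenfunction (hT : ∀ w, 0 ≤ re ⟪w, T w⟫_𝕜)
    {L : ℝ} (hL : 0 < L) {c : 𝕜} (hv : ContDiff ℝ 2 v)
    (hne : ∃ x ∈ Icc 0 L, v x ≠ 0) (heig : ∀ x ∈ Icc 0 L, c • v x = T (deriv (deriv v) x))
    (hbc0 : deriv v 0 = 0) (hbcL : deriv v L = 0) :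
    re c ≤ 0 := by
  have hv' : ContDiff ℝ 1 (deriv v) := hv.iterate_deriv' 1 1
  have := hv'.continuous_deriv le_rfl
  have := hv'.continuous
  have := hv.continuous
  have hnorm_pos : 0 < ∫ x in 0..L, ‖v x‖ ^ 2 := by
    obtain ⟨x₀, hx₀, hvx₀⟩ := hne
    exact integral_pos hL (by fun_prop) (fun x _ ↦ by positivity) ⟨x₀, hx₀, by positivity⟩
  have hdissip : re c * ∫ x in 0..L, ‖v x‖ ^ 2 ≤ 0 := calc
    re c * ∫ x in 0..L, ‖v x‖ ^ 2
      = ∫ x in 0..L, re ⟪v x, T (deriv (deriv v) x)⟫_𝕜 := by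
        rw [← integral_const_mul]
        refine integral_congr fun x hx ↦ ?_
        rw [uIcc_of_le hL.le] at hx
        simp only [← heig x hx, re_inner_smul_self_right]
    _ ≤ ∫ x in 0..L,
          (re ⟪v x, T (deriv (deriv v) x)⟫_𝕜 + re ⟪deriv v x, T (deriv v x)⟫_𝕜) :=
        integral_mono_on hL.le (by apply Continuous.intervalIntegrable; fun_prop)
          (by apply Continuous.intervalIntegrable; fun_prop)
          fun x _ ↦ le_add_of_nonneg_right (hT _)
    _ = 0 := integral_re_inner_apply_deriv_deriv_add_eq_zero T hv hbc0 hbcL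
  exact nonpos_of_mul_nonpos_left hdissip hnorm_pos

end Neumann

theorem cross3C_apply (u v : EuclideanSpace ℂ (Fin 3)) (i : Fin 3) :
    cross3C u v i = ![u 1 * v 2 - u 2 * v 1, u 2 * v 0 - u 0 * v 2, u 0 * v 1 - u 1 * v 0] i :=
  rfl

noncomputable def crossCLM (a : EuclideanSpace ℂ (Fin 3)) :
    EuclideanSpace ℂ (Fin 3) →L[ℂ] EuclideanSpace ℂ (Fin 3) :=
  LinearMap.toContinuousLinearMap ((WithLp.linearEquiv 2 ℂ (Fin 3 → ℂ)).symm.toLinearMap ∘ₗ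
    crossProduct (WithLp.ofLp a) ∘ₗ (WithLp.linearEquiv 2 ℂ (Fin 3 → ℂ)).toLinearMap)

theorem crossCLM_apply (a w : EuclideanSpace ℂ (Fin 3)) : crossCLM a w = cross3C a w := by
  ext i; fin_cases i <;> simp [crossCLM, cross3C_apply, cross_apply]

theorem re_inner_cross3C_self {a : EuclideanSpace ℂ (Fin 3)} (ha : ∀ i, (a i).im = 0)
    (w : EuclideanSpace ℂ (Fin 3)) : re ⟪w, cross3C a w⟫_ℂ = 0 := by
  simp only [re_to_complex, PiLp.inner_apply, RCLike.inner_apply, Fin.sum_univ_three,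
    cross3C_apply, Matrix.cons_val_zero, Matrix.cons_val_one, Matrix.cons_val_two,
    Matrix.head_cons, Matrix.tail_cons, Complex.add_re, Complex.mul_re, Complex.sub_re,
    Complex.sub_im, Complex.mul_im, Complex.conj_re, Complex.conj_im, ha]
  ring

theorem linearized_landau_lifshitz_eigenvalues_nonpositive_general
    (L ν : ℝ) (hL : 0 < L) (hν : 0 ≤ ν)
    (a : EuclideanSpace ℂ (Fin 3)) (ha_real : ∀ i, (a i).im = 0)
    (lam : ℂ) (v : ℝ → EuclideanSpace ℂ (Fin 3))
    (hv : ContDiff ℝ 2 v)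
    (hne : ∃ x ∈ Set.Icc (0 : ℝ) L, v x ≠ 0)
    (heig : ∀ x ∈ Set.Icc (0 : ℝ) L,
      lam • v x = (ν : ℂ) • deriv (deriv v) x + cross3C a (deriv (deriv v) x))
    (hbc0 : deriv v 0 = 0) (hbcL : deriv v L = 0) :
    lam.re ≤ 0 := by
  let T := ((ν : ℂ) • ContinuousLinearMap.id ℂ _ + crossCLM a).restrictScalars ℝ
  have hT : ∀ w, 0 ≤ re ⟪w, T w⟫_ℂ := fun w ↦ by
    simp only [T, ContinuousLinearMap.coe_restrictScalars', add_apply, smul_apply,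
      ContinuousLinearMap.id_apply, crossCLM_apply, inner_add_right, map_add]
    rw [re_inner_smul_self_right, re_inner_cross3C_self ha_real, re_to_complex,
      Complex.ofReal_re, add_zero]
    positivity
  exact re_nonpos_of_neumann_eigenfunction T hT hL hv hne
    (fun x hx ↦ by simp [T, heig x hx, crossCLM_apply]) hbc0 hbcL

/-- Every eigenvalue `λ` of the Landau–Lifshitz operator linearized at
an equilibrium `a` (with `‖a‖ = 1`, regarded as a vector of `ℂ³` with real entries),
namely `λ v = ν v'' + a × v''` with Neumann boundary conditions `v'(0) = v'(L) = 0`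
and `v` not identically zero on `[0, L]`, has nonpositive real part. -/
theorem linearized_landau_lifshitz_eigenvalues_nonpositive
    (L ν : ℝ) (hL : 0 < L) (hν : 0 ≤ ν)
    (a : EuclideanSpace ℂ (Fin 3)) (ha_real : ∀ i, (a i).im = 0) (ha : ‖a‖ = 1)
    (lam : ℂ) (v : ℝ → EuclideanSpace ℂ (Fin 3))
    (hv : ContDiff ℝ 2 v)
    (hne : ∃ x ∈ Set.Icc (0 : ℝ) L, v x ≠ 0)
    (heig : ∀ x ∈ Set.Icc (0 : ℝ) L,
      lam • v x = (ν : ℂ) • deriv (deriv v) x + cross3C a (deriv (deriv v) x))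
    (hbc0 : deriv v 0 = 0) (hbcL : deriv v L = 0) :
    lam.re ≤ 0 :=
  linearized_landau_lifshitz_eigenvalues_nonpositive_general L ν hL hν a ha_real lam v hv hne heig
    hbc0 hbcL
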